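/- For every integer n ≥ 1, m_{4n} = 2n − 1 + m_{n+1}, where m_k (resp. M_k) is the minimum (resp. maximum) number of alternations among length-k factors of the Thue–Morse sequence. -/

import Mathlib

/-- The reduction of a word: replace each maximal run of identical characters
by a single character. -/
def red {α : Type*} [DecidableEq α] (w : List α) : List α :=
  w.destutter (· ≠ ·)

/-- The length-`k` factor of the infinite sequence `x` (1-indexed) starting at
position `i`. -/
def factorAt {α : Type*} (x : ℕ → α) (i k : ℕ) : List α :=
  (List.range k).map (fun j => x (i + j))

/-- The reduced factor complexity: the number of length-`n` factors of `x`,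
counted up to reduced-equivalence (`red v = red w`). -/
noncomputable def redFactorComplexity {α : Type*} [DecidableEq α]
    (x : ℕ → α) (n : ℕ) : ℕ :=
  Set.ncard { u : List α | ∃ i ≥ 1, u = red (factorAt x i n) }

/-- The Thue–Morse sequence (1-indexed): `t n` is the parity of the number of
1's in the binary expansion of `n - 1`. -/
def thueMorse (n : ℕ) : Bool :=
  decide ((Nat.digits 2 (n - 1)).sum % 2 = 1)

/-- The number of alternations (occurrences of 01 or 10) in a binary word. -/
def alt (w : List Bool) : ℕ :=
  (List.zipWith (fun a b => a != b) w w.tail).count true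

/-- The minimum number of alternations among length-`k` factors of Thue–Morse. -/
noncomputable def tmAltMin (k : ℕ) : ℕ :=
  sInf { a : ℕ | ∃ i ≥ 1, a = alt (factorAt thueMorse i k) }

/-- The maximum number of alternations among length-`k` factors of Thue–Morse. -/
noncomputable def tmAltMax (k : ℕ) : ℕ :=
  sSup { a : ℕ | ∃ i ≥ 1, a = alt (factorAt thueMorse i k) }

/-- The Thue–Morse morphism `0 → 01`, `1 → 10`. -/
def mu (w : List Bool) : List Bool :=
  w.flatMap (fun b => if b then [true, false] else [false, true])

/-- The regular paperfolding sequence (1-indexed): writing `n = n' * 2^k` with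
`n'` odd, `f n = 1` iff `n' ≡ 3 (mod 4)`. -/
def paperfold (n : ℕ) : Bool :=
  decide ((n / 2 ^ (n.factorization 2)) % 4 = 3)

/-- The reduced abelian complexity: the number of length-`n` factors of `x`,
counted up to the equivalence identifying `v` and `w` whenever `red v` is a
rearrangement of the characters of `red w`. -/
noncomputable def redAbelianComplexity {α : Type*} [DecidableEq α]
    (x : ℕ → α) (n : ℕ) : ℕ :=
  Set.ncard { m : Multiset α | ∃ i ≥ 1, m = ↑(red (factorAt x i n)) }

/-!
Alternations in a Thue–Morse factor of length `k + 1` are the ones in a length-`k` window of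
the period-doubling sequence `d m = (t m ≠ t (m + 1))`, which satisfies `d (2j+1) = 1` and
`d (2j+2) = ¬ d (j+1)`. Hence a window of length `2k` at `i ≥ 1` holds `2k` minus the ones of
the window of length `k` at `⌈i/2⌉`, and applying this twice, a window of length `4k` at `i`
holds `2k` plus the ones of the window of length `k` at `⌈i/4⌉`. Shortening a window of length
`4n` by its last letter loses at most one `1`, and exactly one when `i` is even; this gives the
lower bound, and `i = 4j - 2` for a minimising `j` attains it.
-/

/-- For `x = thueMorse` this is the period-doubling sequence. -/
def diffSeq (x : ℕ → Bool) (m : ℕ) : Bool :=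
  x m != x (m + 1)

section Factors

variable {α : Type*}

theorem factorAt_succ (x : ℕ → α) (i k : ℕ) :
    factorAt x i (k + 1) = x i :: factorAt x (i + 1) k := by
  simp only [factorAt, List.range_succ_eq_map, List.map_cons, List.map_map, Nat.add_zero]
  congr 1
  exact List.map_congr_left fun j _ => by simp [Nat.add_right_comm, Nat.add_assoc]

theorem factorAt_succ' (x : ℕ → α) (i k : ℕ) :
    factorAt x i (k + 1) = factorAt x i k ++ [x (i + k)] := by
  simp [factorAt, List.range_succ]

theorem count_factorAt_succ (y : ℕ → Bool) (i k : ℕ) :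
    (factorAt y i (k + 1)).count true = (factorAt y i k).count true + (y (i + k)).toNat := by
  rw [factorAt_succ', List.count_append]
  cases y (i + k) <;> rfl

theorem alt_factorAt_succ (x : ℕ → Bool) (i k : ℕ) :
    alt (factorAt x i (k + 1)) = (factorAt (diffSeq x) i k).count true := by
  rw [alt, factorAt_succ, List.tail_cons, ← factorAt_succ]
  congr 1
  apply List.ext_getElem (by simp [factorAt])
  intro m _ _
  simp only [factorAt, diffSeq, List.getElem_zipWith, List.getElem_map, List.getElem_range]
  rw [Nat.add_right_comm]

end Factors

theorem digits_two_sum_two_mul (m : ℕ) :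
    (Nat.digits 2 (2 * m)).sum = (Nat.digits 2 m).sum := by
  rcases Nat.eq_zero_or_pos m with rfl | hm
  · simp
  · rw [Nat.digits_def' (by norm_num) (by omega)]
    simp

theorem digits_two_sum_two_mul_add_one (m : ℕ) :
    (Nat.digits 2 (2 * m + 1)).sum = (Nat.digits 2 m).sum + 1 := by
  rw [Nat.digits_def' (by norm_num) (by omega), show (2 * m + 1) / 2 = m by omega,
    show (2 * m + 1) % 2 = 1 by omega, List.sum_cons, Nat.add_comm]

theorem thueMorse_two_mul_add_one (j : ℕ) : thueMorse (2 * j + 1) = thueMorse (j + 1) := by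
  simp [thueMorse, digits_two_sum_two_mul]

theorem thueMorse_two_mul_add_two (j : ℕ) : thueMorse (2 * j + 2) = !thueMorse (j + 1) := by
  simp only [thueMorse, show 2 * j + 2 - 1 = 2 * j + 1 by omega, Nat.add_sub_cancel,
    digits_two_sum_two_mul_add_one, ← decide_not]
  exact decide_eq_decide.mpr (by omega)

theorem diffSeq_thueMorse_two_mul_add_one (j : ℕ) : diffSeq thueMorse (2 * j + 1) = true := by
  simp [diffSeq, thueMorse_two_mul_add_one, thueMorse_two_mul_add_two]

theorem diffSeq_thueMorse_two_mul_add_two (j : ℕ) :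
    diffSeq thueMorse (2 * j + 2) = !diffSeq thueMorse (j + 1) := by
  rw [diffSeq, diffSeq, thueMorse_two_mul_add_two, show 2 * j + 2 + 1 = 2 * (j + 1) + 1 by ring,
    thueMorse_two_mul_add_one]
  cases thueMorse (j + 1) <;> cases thueMorse (j + 1 + 1) <;> rfl

/-- Of the two differences at `m, m + 1`, one lies in the odd position and equals `1`, the other
is the complement of the difference at `(m + 1) / 2`. -/
theorem diffSeq_thueMorse_pair (m : ℕ) (hm : 1 ≤ m) :
    (diffSeq thueMorse m).toNat + (diffSeq thueMorse (m + 1)).toNat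
      + (diffSeq thueMorse ((m + 1) / 2)).toNat = 2 := by
  rcases Nat.even_or_odd' m with ⟨j, rfl | rfl⟩
  · obtain ⟨j, rfl⟩ : ∃ j', j = j' + 1 := ⟨j - 1, by omega⟩
    rw [show 2 * (j + 1) = 2 * j + 2 by ring, show (2 * j + 2 + 1) / 2 = j + 1 by omega,
      diffSeq_thueMorse_two_mul_add_two, show 2 * j + 2 + 1 = 2 * (j + 1) + 1 by ring,
      diffSeq_thueMorse_two_mul_add_one]
    cases diffSeq thueMorse (j + 1) <;> rfl
  · rw [show 2 * j + 1 + 1 = 2 * j + 2 by ring, show (2 * j + 2) / 2 = j + 1 by omega,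
      diffSeq_thueMorse_two_mul_add_two, diffSeq_thueMorse_two_mul_add_one]
    cases diffSeq thueMorse (j + 1) <;> rfl

theorem count_diffSeq_thueMorse_two_mul (i : ℕ) (hi : 1 ≤ i) (k : ℕ) :
    (factorAt (diffSeq thueMorse) i (2 * k)).count true
      + (factorAt (diffSeq thueMorse) ((i + 1) / 2) k).count true = 2 * k := by
  induction k with
  | zero => rfl
  | succ k ih =>
    have hpair := diffSeq_thueMorse_pair (i + 2 * k) (by omega)
    rw [show (i + 2 * k + 1) / 2 = (i + 1) / 2 + k by omega, Nat.add_assoc i (2 * k) 1] at hpair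
    rw [show 2 * (k + 1) = 2 * k + 1 + 1 by ring, count_factorAt_succ, count_factorAt_succ,
      count_factorAt_succ]
    omega

theorem count_diffSeq_thueMorse_four_mul (i : ℕ) (hi : 1 ≤ i) (k : ℕ) :
    (factorAt (diffSeq thueMorse) i (4 * k)).count true
      = 2 * k + (factorAt (diffSeq thueMorse) ((i + 3) / 4) k).count true := by
  have hfirst := count_diffSeq_thueMorse_two_mul i hi (2 * k)
  have hsecond := count_diffSeq_thueMorse_two_mul ((i + 1) / 2) (by omega) k
  rw [show ((i + 1) / 2 + 1) / 2 = (i + 3) / 4 by omega] at hsecond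
  rw [show 2 * (2 * k) = 4 * k by ring] at hfirst
  omega

theorem tmAltMin_succ (k : ℕ) :
    tmAltMin (k + 1)
      = sInf {a | ∃ i ≥ 1, a = (factorAt (diffSeq thueMorse) i k).count true} := by
  simp only [tmAltMin, alt_factorAt_succ]

theorem stmt6 (n : ℕ) (hn : 1 ≤ n) :
    tmAltMin (4 * n) = 2 * n - 1 + tmAltMin (n + 1) := by
  have h4n : 4 * n = 4 * n - 1 + 1 := by omega
  have hlast (i : ℕ) : (factorAt (diffSeq thueMorse) i (4 * n)).count true
      = (factorAt (diffSeq thueMorse) i (4 * n - 1)).count true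
        + (diffSeq thueMorse (i + (4 * n - 1))).toNat := by
    rw [h4n]; exact count_factorAt_succ _ _ _
  rw [h4n, tmAltMin_succ, tmAltMin_succ]
  set windowCounts := {a | ∃ i ≥ 1, a = (factorAt (diffSeq thueMorse) i n).count true}
  obtain ⟨j, hj, hmin⟩ := Nat.sInf_mem (⟨_, 1, le_rfl, rfl⟩ : windowCounts.Nonempty)
  apply le_antisymm
  · refine Nat.sInf_le ⟨4 * j - 2, by omega, ?_⟩
    have hfour := count_diffSeq_thueMorse_four_mul (4 * j - 2) (by omega) n
    have hodd := diffSeq_thueMorse_two_mul_add_one (2 * j + 2 * n - 2)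
    rw [show 2 * (2 * j + 2 * n - 2) + 1 = 4 * j - 2 + (4 * n - 1) by omega] at hodd
    rw [show (4 * j - 2 + 3) / 4 = j by omega, hlast, hodd, Bool.toNat_true] at hfour
    omega
  · refine le_csInf ⟨_, 1, le_rfl, rfl⟩ ?_
    rintro _ ⟨i, hi, rfl⟩
    have hfour := count_diffSeq_thueMorse_four_mul i hi n
    have hmin_le : sInf windowCounts ≤ (factorAt (diffSeq thueMorse) ((i + 3) / 4) n).count true :=
      Nat.sInf_le ⟨_, by omega, rfl⟩
    have hbit := Bool.toNat_le (diffSeq thueMorse (i + (4 * n - 1)))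
    rw [hlast] at hfour
    omega
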